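/- Let K = (S, Act, →, AP, 𝓛) be a Kripke transition system (doubly labelled transition system), σ a path in K, and φ a UCTL* formula. Then the mapping ks₂ preserves truth: K,σ ⊨ φ if and only if ks₂(K), ks₂(σ) ⊨ ks₂(φ). -/

import Mathlib

/-!
A path of `ks₂(K)` alternates between original states, the ones labelled `F`, and transition
states, and every path starting at an original state is of the form `ks₂(σ)`. One step of `σ`
is two steps of `ks₂(σ)`, and the guard `F` in the translated until confines both its witness
and its failure points to even positions, i.e. to the states of `σ`. Truth then transfers by
a simultaneous structural induction on state and path formulas, the path quantifier going
through the correspondence of paths.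
-/

namespace Stmt4

/-- A path in a Kripke transition system with transition relation `Tr ⊆ S × Act × S`. -/
structure LPath {S Act : Type} (Tr : S → Act → S → Prop) where
  states : ℕ → S
  acts : ℕ → Act
  valid : ∀ n, Tr (states n) (acts n) (states (n + 1))

/-- The suffix of a path, starting at position `k`. -/
def LPath.suffix {S Act : Type} {Tr : S → Act → S → Prop} (σ : LPath Tr) (k : ℕ) :
    LPath Tr where
  states n := σ.states (n + k)
  acts n := σ.acts (n + k)
  valid n := by
    have h := σ.valid (n + k)
    rwa [show n + k + 1 = n + 1 + k by omega] at h

/-- A path in a Kripke structure with transition relation `R ⊆ S × S`. -/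
structure KPath {S : Type} (R : S → S → Prop) where
  states : ℕ → S
  valid : ∀ n, R (states n) (states (n + 1))

/-- The suffix of a path in a Kripke structure, starting at position `k`. -/
def KPath.suffix {S : Type} {R : S → S → Prop} (σ : KPath R) (k : ℕ) : KPath R where
  states n := σ.states (n + k)
  valid n := by
    have h := σ.valid (n + k)
    rwa [show n + k + 1 = n + 1 + k by omega] at h

mutual
/-- UCTL* state formulas over actions `Act` and atomic propositions `AP`:
`φ ::= true | p | ¬φ | φ∧φ' | ∃π`. -/
inductive USF (Act AP : Type) : Type
  | tt : USF Act AP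
  | atom : AP → USF Act AP
  | neg : USF Act AP → USF Act AP
  | and : USF Act AP → USF Act AP → USF Act AP
  | ex : UPF Act AP → USF Act AP

/-- UCTL* path formulas over actions `Act` and atomic propositions `AP`:
`π ::= φ | ¬π | π∧π' | Xπ | X_a π | π U π'`. -/
inductive UPF (Act AP : Type) : Type
  | state : USF Act AP → UPF Act AP
  | neg : UPF Act AP → UPF Act AP
  | and : UPF Act AP → UPF Act AP → UPF Act AP
  | next : UPF Act AP → UPF Act AP
  | anext : Act → UPF Act AP → UPF Act AP
  | unt : UPF Act AP → UPF Act AP → UPF Act AP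
end

mutual
/-- Satisfaction of UCTL* state formulas at a state of a KTS. -/
def usatS {S Act AP : Type} (Tr : S → Act → S → Prop) (Lab : S → Set AP) :
    USF Act AP → S → Prop
  | .tt, _ => True
  | .atom p, s => p ∈ Lab s
  | .neg φ, s => ¬ usatS Tr Lab φ s
  | .and φ ψ, s => usatS Tr Lab φ s ∧ usatS Tr Lab ψ s
  | .ex π, s => ∃ σ : LPath Tr, σ.states 0 = s ∧ usatP Tr Lab π σ

/-- Satisfaction of UCTL* path formulas on a path of a KTS. -/
def usatP {S Act AP : Type} (Tr : S → Act → S → Prop) (Lab : S → Set AP) :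
    UPF Act AP → LPath Tr → Prop
  | .state φ, σ => usatS Tr Lab φ (σ.states 0)
  | .neg π, σ => ¬ usatP Tr Lab π σ
  | .and π π', σ => usatP Tr Lab π σ ∧ usatP Tr Lab π' σ
  | .next π, σ => usatP Tr Lab π (σ.suffix 1)
  | .anext a π, σ => σ.acts 0 = a ∧ usatP Tr Lab π (σ.suffix 1)
  | .unt π π', σ => ∃ j, usatP Tr Lab π' (σ.suffix j) ∧ ∀ i < j, usatP Tr Lab π (σ.suffix i)
end

mutual
/-- CTL* state formulas over atomic propositions `AP`. -/
inductive CSF (AP : Type) : Type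
  | tt : CSF AP
  | atom : AP → CSF AP
  | neg : CSF AP → CSF AP
  | and : CSF AP → CSF AP → CSF AP
  | ex : CPF AP → CSF AP

/-- CTL* path formulas over atomic propositions `AP`. -/
inductive CPF (AP : Type) : Type
  | state : CSF AP → CPF AP
  | neg : CPF AP → CPF AP
  | and : CPF AP → CPF AP → CPF AP
  | next : CPF AP → CPF AP
  | unt : CPF AP → CPF AP → CPF AP
end

mutual
/-- Satisfaction of CTL* state formulas at a state of a Kripke structure. -/
def csatS {S AP : Type} (R : S → S → Prop) (Lab : S → Set AP) : CSF AP → S → Prop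
  | .tt, _ => True
  | .atom p, s => p ∈ Lab s
  | .neg φ, s => ¬ csatS R Lab φ s
  | .and φ ψ, s => csatS R Lab φ s ∧ csatS R Lab ψ s
  | .ex π, s => ∃ σ : KPath R, σ.states 0 = s ∧ csatP R Lab π σ

/-- Satisfaction of CTL* path formulas on a path of a Kripke structure. -/
def csatP {S AP : Type} (R : S → S → Prop) (Lab : S → Set AP) : CPF AP → KPath R → Prop
  | .state φ, σ => csatS R Lab φ (σ.states 0)
  | .neg π, σ => ¬ csatP R Lab π σ
  | .and π π', σ => csatP R Lab π σ ∧ csatP R Lab π' σ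
  | .next π, σ => csatP R Lab π (σ.suffix 1)
  | .unt π π', σ => ∃ j, csatP R Lab π' (σ.suffix j) ∧ ∀ i < j, csatP R Lab π (σ.suffix i)
end

section ks2Construction

variable {S Act AP : Type} (Tr : S → Act → S → Prop) (Lab : S → Set AP)

/-- States of the Kripke structure `ks₂(K)`: the states of `K` together with one fresh
state for each transition of `K`. -/
abbrev KState := S ⊕ {t : S × Act × S // Tr t.1 t.2.1 t.2.2}

/-- The atomic propositions of `ks₂(K)` are `AP ∪ Act ∪ {F}`, with `F` fresh. -/
abbrev AP2 (Act AP : Type) : Type := AP ⊕ Act ⊕ Unit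

/-- The fresh atomic proposition `F`. -/
def Fprop (Act AP : Type) : AP2 Act AP := Sum.inr (Sum.inr ())

/-- Transitions of `ks₂(K)`: for every transition `(s₀, α, s₁)` of `K`, the new state
`(s₀, α, s₁)` sits between `s₀` and `s₁`. -/
def KTrans : KState Tr → KState Tr → Prop
  | .inl s, .inr t => t.1.1 = s
  | .inr t, .inl s => t.1.2.2 = s
  | _, _ => False

/-- Labelling of `ks₂(K)`: an original state `s` is labelled `{F} ∪ 𝓛(s)`, the state
corresponding to a transition `(s₀, α, s₁)` is labelled `{α}`. -/
def KLab : KState Tr → Set (AP2 Act AP)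
  | .inl s => insert (Fprop Act AP) (Sum.inl '' Lab s)
  | .inr t => {Sum.inr (Sum.inl t.1.2.1)}

/-- The path `ks₂(σ)` in `ks₂(K)` induced by a path `σ` in `K`: between consecutive
states of `σ` the corresponding transition-state is inserted. -/
def ks2Path (σ : LPath Tr) : KPath (KTrans Tr) where
  states n :=
    if n % 2 = 0 then Sum.inl (σ.states (n / 2))
    else Sum.inr ⟨(σ.states (n / 2), σ.acts (n / 2), σ.states (n / 2 + 1)), σ.valid (n / 2)⟩
  valid n := by
    rcases Nat.even_or_odd n with ⟨k, hk⟩ | ⟨k, hk⟩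
    · have h1 : n % 2 = 0 := by omega
      have h2 : ¬ (n + 1) % 2 = 0 := by omega
      have h3 : (n + 1) / 2 = n / 2 := by omega
      simp only [h1, h2, if_true, if_false, h3, KTrans]
    · have h1 : ¬ n % 2 = 0 := by omega
      have h2 : (n + 1) % 2 = 0 := by omega
      have h3 : (n + 1) / 2 = n / 2 + 1 := by omega
      simp only [h1, h2, if_true, if_false, h3, KTrans]

end ks2Construction

/-- The atomic proposition `F`, as a CTL* path formula. -/
def Fpf (Act AP : Type) : CPF (AP2 Act AP) := .state (.atom (Fprop Act AP))

mutual
/-- The translation `ks₂` from UCTL* state formulas to CTL* state formulas. -/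
def ks2S {Act AP : Type} : USF Act AP → CSF (AP2 Act AP)
  | .tt => .tt
  | .atom p => .atom (Sum.inl p)
  | .neg φ => .neg (ks2S φ)
  | .and φ ψ => .and (ks2S φ) (ks2S ψ)
  | .ex π => .ex (ks2P π)

/-- The translation `ks₂` from UCTL* path formulas to CTL* path formulas.
(Implication `F ⇒ ψ` is expressed as `¬(F ∧ ¬ψ)`.) -/
def ks2P {Act AP : Type} : UPF Act AP → CPF (AP2 Act AP)
  | .state φ => .state (ks2S φ)
  | .neg π => .neg (ks2P π)
  | .and π π' => .and (ks2P π) (ks2P π')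
  | .next π => .next (.next (ks2P π))
  | .anext a π =>
      .and (.next (.state (.atom (Sum.inr (Sum.inl a))))) (.next (.next (ks2P π)))
  | .unt π π' =>
      .unt (.neg (.and (Fpf Act AP) (.neg (ks2P π)))) (.and (Fpf Act AP) (ks2P π'))
end

@[ext]
theorem KPath.ext {S : Type} {R : S → S → Prop} {τ τ' : KPath R}
    (h : τ.states = τ'.states) : τ = τ' := by
  cases τ; cases τ'; cases h; rfl

@[simp]
theorem KPath.suffix_states {S : Type} {R : S → S → Prop} (τ : KPath R) (k n : ℕ) :
    (τ.suffix k).states n = τ.states (n + k) := rfl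

theorem KPath.suffix_suffix {S : Type} {R : S → S → Prop} (τ : KPath R) (a b : ℕ) :
    (τ.suffix a).suffix b = τ.suffix (b + a) := by
  ext n
  simp only [KPath.suffix_states, Nat.add_assoc]

theorem exists_even_until_iff {P Q : ℕ → Prop} :
    (∃ j, (Even j ∧ Q j) ∧ ∀ i < j, ¬(Even i ∧ ¬P i)) ↔ ∃ k, Q (2 * k) ∧ ∀ i < k, P (2 * i) := by
  constructor
  · rintro ⟨j, ⟨⟨k, rfl⟩, hQ⟩, hP⟩
    refine ⟨k, by rwa [two_mul], fun i hi => ?_⟩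
    by_contra h
    exact hP (2 * i) (by omega) ⟨even_two_mul i, h⟩
  · rintro ⟨k, hQ, hP⟩
    refine ⟨2 * k, ⟨even_two_mul k, hQ⟩, ?_⟩
    rintro i hi ⟨⟨m, rfl⟩, hn⟩
    exact hn (by simpa only [two_mul] using hP m (by omega))

section ks2Properties

variable {S Act AP : Type} {Tr : S → Act → S → Prop} {Lab : S → Set AP}

theorem ks2Path_states_two_mul (σ : LPath Tr) (k : ℕ) :
    (ks2Path Tr σ).states (2 * k) = .inl (σ.states k) := by
  simp [ks2Path]

theorem ks2Path_states_two_mul_add_one (σ : LPath Tr) (k : ℕ) :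
    (ks2Path Tr σ).states (2 * k + 1) =
      .inr ⟨(σ.states k, σ.acts k, σ.states (k + 1)), σ.valid k⟩ := by
  have h : (2 * k + 1) / 2 = k := by omega
  simp [ks2Path, h]

theorem ks2Path_suffix_two_mul (σ : LPath Tr) (k : ℕ) :
    (ks2Path Tr σ).suffix (2 * k) = ks2Path Tr (σ.suffix k) := by
  ext n
  obtain ⟨m, rfl | rfl⟩ := Nat.even_or_odd' n
  · rw [KPath.suffix_states, ← Nat.mul_add, ks2Path_states_two_mul, ks2Path_states_two_mul]
    rfl
  · rw [KPath.suffix_states, Nat.add_right_comm, ← Nat.mul_add, ks2Path_states_two_mul_add_one,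
      ks2Path_states_two_mul_add_one]
    simp only [LPath.suffix, Nat.add_right_comm m 1 k]

theorem ks2Path_suffix_one_suffix_one (σ : LPath Tr) :
    ((ks2Path Tr σ).suffix 1).suffix 1 = ks2Path Tr (σ.suffix 1) := by
  rw [KPath.suffix_suffix]
  exact ks2Path_suffix_two_mul σ 1

theorem kTrans_inr_right_iff {x : KState Tr} {t : {t : S × Act × S // Tr t.1 t.2.1 t.2.2}} :
    KTrans Tr x (.inr t) ↔ x = .inl t.1.1 := by
  cases x <;> simp [KTrans, eq_comm]

theorem kTrans_inr_left_iff {t : {t : S × Act × S // Tr t.1 t.2.1 t.2.2}} {y : KState Tr} :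
    KTrans Tr (.inr t) y ↔ y = .inl t.1.2.2 := by
  cases y <;> simp [KTrans, eq_comm]

theorem KTrans.isLeft_eq_not {x y : KState Tr} (h : KTrans Tr x y) : y.isLeft = !x.isLeft := by
  cases x <;> cases y <;> simp_all [KTrans]

theorem KPath.isLeft_states_iff (τ : KPath (KTrans Tr)) (h₀ : (τ.states 0).isLeft) (n : ℕ) :
    (τ.states n).isLeft ↔ Even n := by
  induction n with
  | zero => simpa using h₀
  | succ n ih => rw [(τ.valid n).isLeft_eq_not, Nat.even_add_one, ← ih]; simp

theorem fprop_mem_kLab_ks2Path_iff (σ : LPath Tr) (n : ℕ) :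
    Fprop Act AP ∈ KLab Tr Lab ((ks2Path Tr σ).states n) ↔ Even n := by
  have hF (x : KState Tr) : Fprop Act AP ∈ KLab Tr Lab x ↔ x.isLeft := by
    cases x <;> simp [KLab, Fprop]
  rw [hF]
  exact (ks2Path Tr σ).isLeft_states_iff rfl n

theorem act_mem_kLab_ks2Path_one (σ : LPath Tr) (a : Act) :
    .inr (.inl a) ∈ KLab Tr Lab ((ks2Path Tr σ).states 1) ↔ σ.acts 0 = a := by
  simp [ks2Path, KLab, eq_comm]

theorem exists_ks2Path_eq (τ : KPath (KTrans Tr)) (h₀ : (τ.states 0).isLeft) :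
    ∃ σ : LPath Tr, ks2Path Tr σ = τ := by
  have hodd (k : ℕ) : ∃ t, τ.states (2 * k + 1) = .inr t := by
    rw [← Sum.isRight_iff, ← Sum.not_isLeft, τ.isLeft_states_iff h₀]
    exact Nat.not_even_iff_odd.2 (odd_two_mul_add_one k)
  choose t ht using hodd
  have hsrc (k : ℕ) : τ.states (2 * k) = .inl (t k).1.1 :=
    kTrans_inr_right_iff.1 (ht k ▸ τ.valid (2 * k))
  have htgt (k : ℕ) : τ.states (2 * k + 2) = .inl (t k).1.2.2 :=
    kTrans_inr_left_iff.1 (ht k ▸ τ.valid (2 * k + 1))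
  have hlink (k : ℕ) : (t (k + 1)).1.1 = (t k).1.2.2 :=
    Sum.inl_injective ((hsrc (k + 1)).symm.trans (htgt k))
  refine ⟨⟨fun k => (t k).1.1, fun k => (t k).1.2.1, fun k => hlink k ▸ (t k).2⟩, ?_⟩
  ext n
  obtain ⟨k, rfl | rfl⟩ := Nat.even_or_odd' n
  · rw [ks2Path_states_two_mul, hsrc]
  · rw [ks2Path_states_two_mul_add_one, ht]
    exact congrArg Sum.inr (Subtype.ext (Prod.ext rfl (Prod.ext rfl (hlink k))))

theorem exists_kPath_inl_iff {P : KPath (KTrans Tr) → Prop} {s : S} :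
    (∃ τ : KPath (KTrans Tr), τ.states 0 = .inl s ∧ P τ) ↔
      ∃ σ : LPath Tr, σ.states 0 = s ∧ P (ks2Path Tr σ) := by
  constructor
  · rintro ⟨τ, hτ, hP⟩
    obtain ⟨σ, rfl⟩ := exists_ks2Path_eq τ (by rw [hτ]; rfl)
    exact ⟨σ, Sum.inl_injective hτ, hP⟩
  · rintro ⟨σ, rfl, hP⟩
    exact ⟨ks2Path Tr σ, rfl, hP⟩

mutual

theorem usatS_iff_csatS_ks2S (φ : USF Act AP) (s : S) :
    usatS Tr Lab φ s ↔ csatS (KTrans Tr) (KLab Tr Lab) (ks2S φ) (.inl s) := by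
  cases φ with
  | tt => exact Iff.rfl
  | atom p => simp [usatS, csatS, ks2S, KLab, Fprop]
  | neg φ => exact not_congr (usatS_iff_csatS_ks2S φ s)
  | and φ ψ => exact and_congr (usatS_iff_csatS_ks2S φ s) (usatS_iff_csatS_ks2S ψ s)
  | ex π =>
    rw [usatS, ks2S, csatS, exists_kPath_inl_iff]
    exact exists_congr fun σ => and_congr_right' (usatP_iff_csatP_ks2P π σ)

theorem usatP_iff_csatP_ks2P (π : UPF Act AP) (σ : LPath Tr) :
    usatP Tr Lab π σ ↔ csatP (KTrans Tr) (KLab Tr Lab) (ks2P π) (ks2Path Tr σ) := by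
  cases π with
  | state φ => exact usatS_iff_csatS_ks2S φ (σ.states 0)
  | neg π => exact not_congr (usatP_iff_csatP_ks2P π σ)
  | and π π' => exact and_congr (usatP_iff_csatP_ks2P π σ) (usatP_iff_csatP_ks2P π' σ)
  | next π =>
    rw [usatP, ks2P, csatP, csatP, ks2Path_suffix_one_suffix_one]
    exact usatP_iff_csatP_ks2P π (σ.suffix 1)
  | anext a π =>
    simp only [usatP, ks2P, csatP, csatS, KPath.suffix_states, zero_add,
      act_mem_kLab_ks2Path_one, ks2Path_suffix_one_suffix_one]
    exact and_congr_right' (usatP_iff_csatP_ks2P π (σ.suffix 1))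
  | unt π π' =>
    simp only [usatP, ks2P, Fpf, csatP, csatS, KPath.suffix_states, zero_add,
      fprop_mem_kLab_ks2Path_iff]
    rw [exists_even_until_iff]
    simp only [ks2Path_suffix_two_mul, ← usatP_iff_csatP_ks2P π, ← usatP_iff_csatP_ks2P π']

end

end ks2Properties

/-- Let `K` be a Kripke transition system, `σ` a path in `K`, and `φ` a
UCTL* formula. Then the mapping `ks₂` preserves truth: `K,σ ⊨ φ` iff
`ks₂(K), ks₂(σ) ⊨ ks₂(φ)`. -/
theorem ks2_preserves_truth {S Act AP : Type} (Tr : S → Act → S → Prop)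
    (Lab : S → Set AP) (σ : LPath Tr) (φ : UPF Act AP) :
    usatP Tr Lab φ σ ↔ csatP (KTrans Tr) (KLab Tr Lab) (ks2P φ) (ks2Path Tr σ) :=
  usatP_iff_csatP_ks2P φ σ

end Stmt4
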